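/- For every x ∈ Int(Dom(φ)) and every z ∈ ℝᵈ, one has ∂φ_*(x; z) = inf_{x* ∈ ∂φ(x)} ⟨x*, z⟩ (the subdifferential ∂φ(x) being nonempty at interior points of the domain, this infimum is a real number). -/

import Mathlib

open scoped RealInnerProductSpace

/-- The subdifferential of an extended-real-valued function ψ at x. -/
def subdiff {d : ℕ} (ψ : EuclideanSpace ℝ (Fin d) → EReal)
    (x : EuclideanSpace ℝ (Fin d)) : Set (EuclideanSpace ℝ (Fin d)) :=
  {y | ∀ z, ((⟪y, z - x⟫ : ℝ) : EReal) + ψ x ≤ ψ z}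

/-- ∂φ_*(x; z): the liminf of ⟨x*, z'⟩ over triples (x', z', x*) with x* ∈ ∂φ(x'),
as (x', z') → (x, z).  (Equivalently, the liminf as (x', z') → (x, z) of the infimum
of ⟨x*, z'⟩ over x* ∈ ∂φ(x'), computed in [−∞, +∞].) -/
noncomputable def subdiffLiminf {d : ℕ} (φ : EuclideanSpace ℝ (Fin d) → EReal)
    (x z : EuclideanSpace ℝ (Fin d)) : EReal :=
  Filter.liminf
    (fun p : EuclideanSpace ℝ (Fin d) × EuclideanSpace ℝ (Fin d) =>
      ⨅ y ∈ subdiff φ p.1, ((⟪y, p.2⟫ : ℝ) : EReal))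
    (nhds (x, z))

/-!
On the interior of its domain a proper convex function is real-valued and continuous, so a
supporting hyperplane to its strict epigraph gives a subgradient at every interior point, and
testing the subgradient inequality on a small sphere bounds all subgradients near `x` uniformly.
A closed-graph argument (limits of subgradients at `xₙ → x` are subgradients at `x`, by
continuity of the function at `x`) together with this bound and the compactness of a ball makes
`(x', z') ↦ inf_{y ∈ ∂φ(x')} ⟪y, z'⟫` lower semicontinuous at `(x, z)`; the reverse inequality
for the liminf is trivial because `(x, z)` belongs to each of its neighbourhoods.
-/

open Filter Metric Set
open scoped Topology

theorem ContinuousOn.isOpen_strictEpigraph {X : Type*} [TopologicalSpace X] {U : Set X}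
    {f : X → ℝ} (hU : IsOpen U) (hf : ContinuousOn f U) :
    IsOpen {p : X × ℝ | p.1 ∈ U ∧ f p.1 < p.2} := by
  refine isOpen_iff_mem_nhds.mpr fun p hp => ?_
  have hfp : ContinuousAt (fun q : X × ℝ => f q.1) p :=
    (hf.continuousAt (hU.mem_nhds hp.1)).comp continuousAt_fst
  exact (continuousAt_fst.eventually_mem (hU.mem_nhds hp.1)).and
    (hfp.eventually_lt continuousAt_snd hp.2)

section Subgradient

variable {E : Type*} [NormedAddCommGroup E] [InnerProductSpace ℝ E]

def IsSubgradientOn (f : E → ℝ) (s : Set E) (x y : E) : Prop :=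
  ∀ w ∈ s, ⟪y, w - x⟫ + f x ≤ f w

variable {f : E → ℝ} {s : Set E} {x y : E}

theorem ConvexOn.isSubgradientOn_of_interior (hf : ConvexOn ℝ s f) (hx : x ∈ interior s)
    (hy : IsSubgradientOn f (interior s) x y) : IsSubgradientOn f s x y := by
  intro w hw
  have hxs : x ∈ s := interior_subset hx
  have hmid : (2⁻¹ : ℝ) • x + (2⁻¹ : ℝ) • w ∈ interior s :=
    hf.1.combo_interior_self_mem_interior hx hw (by norm_num) (by norm_num) (by norm_num)
  have hsub : ((2⁻¹ : ℝ) • x + (2⁻¹ : ℝ) • w) - x = (2⁻¹ : ℝ) • (w - x) := by module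
  have h1 := hy _ hmid
  have h2 := hf.2 hxs hw (by norm_num : (0 : ℝ) ≤ 2⁻¹) (by norm_num : (0 : ℝ) ≤ 2⁻¹)
    (by norm_num)
  rw [hsub, real_inner_smul_right] at h1
  simp only [smul_eq_mul] at h2
  linarith

theorem ConvexOn.exists_isSubgradientOn_interior [FiniteDimensional ℝ E]
    (hf : ConvexOn ℝ s f) (hx : x ∈ interior s) : ∃ y, IsSubgradientOn f (interior s) x y := by
  have hfi : ConvexOn ℝ (interior s) f := hf.subset interior_subset hf.1.interior
  obtain ⟨ℓ, hℓ⟩ := geometric_hahn_banach_open_point hfi.convex_strict_epigraph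
    (ContinuousOn.isOpen_strictEpigraph isOpen_interior hf.continuousOn_interior)
    (fun h => lt_irrefl _ h.2 : (x, f x) ∉ {p : E × ℝ | p.1 ∈ interior s ∧ f p.1 < p.2})
  set g := ℓ.comp (ContinuousLinearMap.inl ℝ E ℝ)
  set c := ℓ (0, 1)
  have hℓ_apply : ∀ w t, ℓ (w, t) = g w + t * c := fun w t => by
    rw [← ℓ.comp_inl_add_comp_inr]
    simpa [g, c] using ℓ.map_smul t ((0 : E), (1 : ℝ))
  -- the supporting hyperplane is not vertical, because `(x, f x + 1)` lies above the graph
  have hc : c < 0 := by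
    have := hℓ (x, f x + 1) ⟨hx, by simp⟩
    rw [hℓ_apply, hℓ_apply] at this
    linarith
  have hsupp : ∀ w ∈ interior s, g w + f w * c ≤ g x + f x * c := fun w hw =>
    le_of_forall_pos_lt_add fun ε hε => by
      have hεc : ε / c < 0 := div_neg_of_pos_of_neg hε hc
      have := hℓ (w, f w - ε / c) ⟨hw, by simp only; linarith⟩
      rw [hℓ_apply, hℓ_apply, sub_mul, div_mul_cancel₀ _ hc.ne] at this
      linarith
  have := FiniteDimensional.complete ℝ E
  refine ⟨(InnerProductSpace.toDual ℝ E).symm ((-c)⁻¹ • g), fun w hw => ?_⟩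
  rw [InnerProductSpace.toDual_symm_apply, FunLike.coe_smul, Pi.smul_apply, map_sub, smul_eq_mul,
    ← div_eq_inv_mul, div_add' _ _ _ (by linarith), div_le_iff₀ (by linarith)]
  nlinarith [hsupp w hw]

theorem ConvexOn.exists_isSubgradientOn [FiniteDimensional ℝ E] (hf : ConvexOn ℝ s f)
    (hx : x ∈ interior s) : ∃ y, IsSubgradientOn f s x y :=
  (hf.exists_isSubgradientOn_interior hx).imp fun _ => hf.isSubgradientOn_of_interior hx

theorem IsSubgradientOn.norm_le {ε C : ℝ} (hy : IsSubgradientOn f (closedBall x ε) x y)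
    (hε : 0 < ε) (hC : ∀ w ∈ closedBall x ε, |f w| ≤ C) : ε * ‖y‖ ≤ 2 * C := by
  have hCx := abs_le.mp (hC x (mem_closedBall_self hε.le))
  rcases eq_or_ne y 0 with rfl | hy0
  · simp only [norm_zero, mul_zero]
    linarith
  have hny : 0 < ‖y‖ := norm_pos_iff.mpr hy0
  set w := x + (ε / ‖y‖) • y
  have hwx : w - x = (ε / ‖y‖) • y := add_sub_cancel_left x _
  have hw : w ∈ closedBall x ε := by
    rw [mem_closedBall, dist_eq_norm, hwx, norm_smul, Real.norm_of_nonneg (by positivity),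
      div_mul_cancel₀ _ hny.ne']
  have hinner : ⟪y, w - x⟫ = ε * ‖y‖ := by
    rw [hwx, real_inner_smul_right, real_inner_self_eq_norm_sq]
    field_simp
  have h := hy w hw
  have hCw := abs_le.mp (hC w hw)
  linarith

theorem ConvexOn.exists_eventually_norm_le_of_isSubgradientOn [FiniteDimensional ℝ E]
    (hf : ConvexOn ℝ s f) (hx : x ∈ interior s) :
    ∃ R, ∀ᶠ x' in 𝓝 x, ∀ y, IsSubgradientOn f s x' y → ‖y‖ ≤ R := by
  have hcont : ContinuousAt f x :=
    hf.continuousOn_interior.continuousAt (isOpen_interior.mem_nhds hx)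
  have hs : ∀ᶠ w in 𝓝 x, w ∈ s := mem_interior_iff_mem_nhds.mp hx
  have hloc : ∀ᶠ w in 𝓝 x, w ∈ s ∧ |f w| < |f x| + 1 := hs.and <|
    (continuous_abs.continuousAt.comp hcont).eventually_lt continuousAt_const (lt_add_one _)
  obtain ⟨ε, hε, hball⟩ := Metric.eventually_nhds_iff_ball.mp hloc
  refine ⟨2 * (|f x| + 1) / (ε / 2), ?_⟩
  filter_upwards [ball_mem_nhds x (half_pos hε)] with x' hx' y hy
  have hsub : closedBall x' (ε / 2) ⊆ ball x ε :=
    closedBall_subset_ball' (by rw [mem_ball] at hx'; linarith)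
  rw [le_div_iff₀ (half_pos hε), mul_comm]
  exact IsSubgradientOn.norm_le (fun w hw => hy w (hball w (hsub hw)).1) (half_pos hε)
    fun w hw => (hball w (hsub hw)).2.le

theorem IsSubgradientOn.of_frequently (hf : ContinuousAt f x)
    (h : ∃ᶠ q in 𝓝 (x, y), IsSubgradientOn f s q.1 q.2) : IsSubgradientOn f s x y := by
  intro w hw
  have hlim : ContinuousAt (fun q : E × E => ⟪q.2, w - q.1⟫ + f q.1) (x, y) :=
    (continuousAt_snd.inner (continuousAt_const.sub continuousAt_fst)).add
      (hf.comp continuousAt_fst)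
  exact le_of_tendsto_of_frequently hlim.tendsto (h.mono fun q hq => hq w hw)

end Subgradient

section SupportFunction

variable {E : Type*} [NormedAddCommGroup E] [InnerProductSpace ℝ E]

theorem exists_real_eq_biInf_inner {S : Set E} {R : ℝ} (hS : S.Nonempty)
    (hR : ∀ y ∈ S, ‖y‖ ≤ R) (z : E) : ∃ r : ℝ, ⨅ y ∈ S, ((⟪y, z⟫ : ℝ) : EReal) = r := by
  obtain ⟨y₀, hy₀⟩ := hS
  have hlt_top : ⨅ y ∈ S, ((⟪y, z⟫ : ℝ) : EReal) < ⊤ :=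
    (iInf₂_le y₀ hy₀).trans_lt (EReal.coe_lt_top _)
  have hbot_lt : ⊥ < ⨅ y ∈ S, ((⟪y, z⟫ : ℝ) : EReal) := by
    refine (EReal.bot_lt_coe (-(R * ‖z‖))).trans_le (le_iInf₂ fun y hy => ?_)
    have := neg_le_of_abs_le (abs_real_inner_le_norm y z)
    have := mul_le_mul_of_nonneg_right (hR y hy) (norm_nonneg z)
    exact EReal.coe_le_coe_iff.mpr (by linarith)
  exact ⟨_, (EReal.coe_toReal hlt_top.ne hbot_lt.ne').symm⟩

theorem lowerSemicontinuousAt_biInf_inner [ProperSpace E] {S : E → Set E} {x : E} {R : ℝ}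
    (hbdd : ∀ᶠ x' in 𝓝 x, ∀ y ∈ S x', ‖y‖ ≤ R)
    (hclosed : ∀ y, (∃ᶠ q in 𝓝 (x, y), q.2 ∈ S q.1) → y ∈ S x) (z : E) :
    LowerSemicontinuousAt (fun p : E × E => ⨅ y ∈ S p.1, ((⟪y, p.2⟫ : ℝ) : EReal)) (x, z) := by
  intro r hr
  obtain ⟨r', hrr', hr'⟩ := EReal.lt_iff_exists_real_btwn.mp hr
  have hK : ∀ᶠ p in 𝓝 (x, z), ∀ y ∈ closedBall (0 : E) R, y ∈ S p.1 → r' < ⟪y, p.2⟫ := by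
    refine (isCompact_closedBall 0 R).eventually_forall_of_forall_eventually fun y _ => ?_
    by_cases hy : y ∈ S x
    · have hyz : r' < ⟪y, z⟫ := EReal.coe_lt_coe_iff.mp (hr'.trans_le (iInf₂_le y hy))
      have hcont : ContinuousAt (fun q : (E × E) × E => ⟪q.2, q.1.2⟫) ((x, z), y) := by
        fun_prop
      filter_upwards [continuousAt_const.eventually_lt hcont hyz] with q hq _ using hq
    · have hev : ∀ᶠ q in 𝓝 (x, y), q.2 ∉ S q.1 := not_frequently.mp (mt (hclosed y) hy)
      have hcont : ContinuousAt (fun q : (E × E) × E => (q.1.1, q.2)) ((x, z), y) := by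
        fun_prop
      filter_upwards [hcont.eventually hev] with q hq hmem using absurd hmem hq
  filter_upwards [hK, continuousAt_fst.eventually hbdd] with p hp hpR
  refine hrr'.trans_le (le_iInf₂ fun y hy => EReal.coe_le_coe_iff.mpr ?_)
  exact (hp y (mem_closedBall_zero_iff.mpr (hpR y hy)) hy).le

end SupportFunction

theorem convexOn_toReal_of_ne_bot {E : Type*} [AddCommGroup E] [Module ℝ E] {φ : E → EReal}
    (hbot : ∀ x, φ x ≠ ⊥)
    (hconv : ∀ x y : E, ∀ a b : ℝ, 0 ≤ a → 0 ≤ b → a + b = 1 →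
      φ (a • x + b • y) ≤ (a : EReal) * φ x + (b : EReal) * φ y) :
    ConvexOn ℝ {w | φ w ≠ ⊤} (fun w => (φ w).toReal) := by
  have hle : ∀ u ∈ {w | φ w ≠ ⊤}, ∀ v ∈ {w | φ w ≠ ⊤}, ∀ a b : ℝ, 0 ≤ a → 0 ≤ b → a + b = 1 →
      φ (a • u + b • v) ≤ ((a * (φ u).toReal + b * (φ v).toReal : ℝ) : EReal) := by
    intro u hu v hv a b ha hb hab
    have h := hconv u v a b ha hb hab
    rw [← EReal.coe_toReal hu (hbot u), ← EReal.coe_toReal hv (hbot v)] at h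
    exact_mod_cast h
  refine ⟨fun u hu v hv a b ha hb hab => ?_, fun u hu v hv a b ha hb hab => ?_⟩
  · exact ne_top_of_le_ne_top (EReal.coe_ne_top _) (hle u hu v hv a b ha hb hab)
  · have h := EReal.toReal_le_toReal (hle u hu v hv a b ha hb hab) (hbot _) (EReal.coe_ne_top _)
    rwa [EReal.toReal_coe] at h

section Subdifferential

variable {d : ℕ} {φ : EuclideanSpace ℝ (Fin d) → EReal} {x : EuclideanSpace ℝ (Fin d)}

theorem mem_subdiff_iff_isSubgradientOn (hbot : ∀ x, φ x ≠ ⊥) (hx : φ x ≠ ⊤)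
    {y : EuclideanSpace ℝ (Fin d)} :
    y ∈ subdiff φ x ↔ IsSubgradientOn (fun w => (φ w).toReal) {w | φ w ≠ ⊤} x y := by
  refine ⟨fun hy w hw => ?_, fun hy w => ?_⟩
  · have h := hy w
    rw [← EReal.coe_toReal hx (hbot x), ← EReal.coe_toReal hw (hbot w)] at h
    exact_mod_cast h
  · by_cases hw : φ w = ⊤
    · simp [hw]
    · rw [← EReal.coe_toReal hx (hbot x), ← EReal.coe_toReal hw (hbot w)]
      exact_mod_cast hy w hw

theorem subdiff_nonempty_of_mem_interior (hbot : ∀ x, φ x ≠ ⊥)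
    (hf : ConvexOn ℝ {w | φ w ≠ ⊤} (fun w => (φ w).toReal)) (hx : x ∈ interior {w | φ w ≠ ⊤}) :
    (subdiff φ x).Nonempty :=
  (hf.exists_isSubgradientOn hx).imp fun _ hy =>
    (mem_subdiff_iff_isSubgradientOn hbot (interior_subset hx)).mpr hy

theorem exists_eventually_norm_le_of_mem_subdiff (hbot : ∀ x, φ x ≠ ⊥)
    (hf : ConvexOn ℝ {w | φ w ≠ ⊤} (fun w => (φ w).toReal)) (hx : x ∈ interior {w | φ w ≠ ⊤}) :
    ∃ R, ∀ᶠ x' in 𝓝 x, ∀ y ∈ subdiff φ x', ‖y‖ ≤ R := by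
  obtain ⟨R, hR⟩ := hf.exists_eventually_norm_le_of_isSubgradientOn hx
  refine ⟨R, ?_⟩
  filter_upwards [hR, isOpen_interior.mem_nhds hx] with x' hx'R hx' y hy
  exact hx'R y ((mem_subdiff_iff_isSubgradientOn hbot (interior_subset hx')).mp hy)

theorem mem_subdiff_of_frequently (hbot : ∀ x, φ x ≠ ⊥)
    (hf : ConvexOn ℝ {w | φ w ≠ ⊤} (fun w => (φ w).toReal)) (hx : x ∈ interior {w | φ w ≠ ⊤})
    {y : EuclideanSpace ℝ (Fin d)}
    (hy : ∃ᶠ q in 𝓝 (x, y), q.2 ∈ subdiff φ q.1) : y ∈ subdiff φ x := by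
  have hcont : ContinuousAt (fun w => (φ w).toReal) x :=
    hf.continuousOn_interior.continuousAt (isOpen_interior.mem_nhds hx)
  have hint : ∀ᶠ q in 𝓝 (x, y), q.1 ∈ interior {w | φ w ≠ ⊤} :=
    continuousAt_fst.eventually (isOpen_interior.mem_nhds hx)
  refine (mem_subdiff_iff_isSubgradientOn hbot (interior_subset hx)).mpr
    (IsSubgradientOn.of_frequently hcont ?_)
  refine (hy.and_eventually hint).mono fun q ⟨hq, hq1⟩ => ?_
  exact (mem_subdiff_iff_isSubgradientOn hbot (interior_subset hq1)).mp hq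

end Subdifferential

theorem subdiffLiminf_eq_inf_interior_general {d : ℕ}
    (φ : EuclideanSpace ℝ (Fin d) → EReal)
    (hbot : ∀ x, φ x ≠ ⊥)
    (hconv : ∀ x y : EuclideanSpace ℝ (Fin d), ∀ a b : ℝ,
      0 ≤ a → 0 ≤ b → a + b = 1 →
      φ (a • x + b • y) ≤ (a : EReal) * φ x + (b : EReal) * φ y)
    (x : EuclideanSpace ℝ (Fin d))
    (hx : x ∈ interior {w | φ w ≠ ⊤})
    (z : EuclideanSpace ℝ (Fin d)) :
    subdiffLiminf φ x z = (⨅ y ∈ subdiff φ x, ((⟪y, z⟫ : ℝ) : EReal)) ∧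
    (subdiff φ x).Nonempty ∧
    ∃ r : ℝ, (⨅ y ∈ subdiff φ x, ((⟪y, z⟫ : ℝ) : EReal)) = (r : EReal) := by
  have hf := convexOn_toReal_of_ne_bot hbot hconv
  have hne := subdiff_nonempty_of_mem_interior hbot hf hx
  obtain ⟨R, hR⟩ := exists_eventually_norm_le_of_mem_subdiff hbot hf hx
  have hlsc := lowerSemicontinuousAt_biInf_inner hR
    (fun _ => mem_subdiff_of_frequently hbot hf hx) z
  refine ⟨le_antisymm (liminf_le_of_frequently_le' ?_) hlsc.le_liminf, hne,
    exists_real_eq_biInf_inner hne hR.self_of_nhds z⟩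
  refine Frequently.filter_mono ?_ (pure_le_nhds (x, z))
  exact frequently_pure.mpr le_rfl

/-- For every x ∈ Int(Dom(φ)) and every z ∈ ℝᵈ one has
∂φ_*(x; z) = inf_{x* ∈ ∂φ(x)} ⟨x*, z⟩; the subdifferential ∂φ(x) is nonempty at such
interior points and this infimum is a real number. -/
theorem subdiffLiminf_eq_inf_interior {d : ℕ} (hd : 0 < d)
    (φ : EuclideanSpace ℝ (Fin d) → EReal)
    (hbot : ∀ x, φ x ≠ ⊥)
    (hproper : ∃ x, φ x ≠ ⊤)
    (hconv : ∀ x y : EuclideanSpace ℝ (Fin d), ∀ a b : ℝ,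
      0 ≤ a → 0 ≤ b → a + b = 1 →
      φ (a • x + b • y) ≤ (a : EReal) * φ x + (b : EReal) * φ y)
    (hlsc : LowerSemicontinuous φ)
    (x : EuclideanSpace ℝ (Fin d))
    (hx : x ∈ interior {w | φ w ≠ ⊤})
    (z : EuclideanSpace ℝ (Fin d)) :
    subdiffLiminf φ x z = (⨅ y ∈ subdiff φ x, ((⟪y, z⟫ : ℝ) : EReal)) ∧
    (subdiff φ x).Nonempty ∧
    ∃ r : ℝ, (⨅ y ∈ subdiff φ x, ((⟪y, z⟫ : ℝ) : EReal)) = (r : EReal) :=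
  subdiffLiminf_eq_inf_interior_general φ hbot hconv x hx z
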